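/- Sub-volume-law bound: let S_I be a nonempty finite set of images over P = A ⊔ B, let F be the normalized indicator target function of S_I (F(s) = 1/√|S_I| if s ∈ S_I, else 0), and let R ⊆ A. Suppose that for all images s_A, s'_A over A, the number N_{s_A s'_A} of images s_B over B with both (s_A, s_B) ∈ S_I and (s'_A, s_B) ∈ S_I depends only on the restrictions of s_A and s'_A to R. Then the entanglement entropy of F satisfies S(ρ^A) ≤ |R| · log 2. -/

import Mathlib

/-!
`ρ^A` is the Gram matrix of the slices `s_B ↦ F (s_A, s_B)`, so it is positive semidefinite
with trace `∑ s, |F s|² = 1`: its eigenvalues form a probability vector with at most `rank ρ^A`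
nonzero entries, and Jensen's inequality for `log` gives `S(ρ^A) ≤ log (rank ρ^A)`.
For the normalized indicator of `S_I`, `ρ^A (s_A, s'_A) = N_{s_A s'_A} / |S_I|`. If `N` only sees
the restrictions to `R`, then `ρ^A` is pulled back along the restriction map
`{0,1}^A → {0,1}^R` from a `2^|R| × 2^|R|` matrix, so its rank is at most `2^|R|`.
-/

noncomputable def vonNeumannEntropy {n : Type*} [Fintype n] [DecidableEq n]
    {ρ : Matrix n n ℂ} (hρ : ρ.IsHermitian) : ℝ :=
  ∑ k, Real.negMulLog (hρ.eigenvalues k)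

open Finset Matrix ComplexConjugate ComplexOrder

theorem Real.sum_negMulLog_le_log_of_card_support_le {ι : Type*} [Fintype ι] {w : ι → ℝ}
    (hw : ∀ i, 0 ≤ w i) (hsum : ∑ i, w i = 1) {d : ℕ}
    (hd : Fintype.card {i // w i ≠ 0} ≤ d) :
    ∑ i, negMulLog (w i) ≤ log d := by
  classical
  set T : Finset ι := {i | w i ≠ 0}
  have hpos : ∀ i ∈ T, 0 < w i := fun i hi => (hw i).lt_of_ne' (mem_filter.mp hi).2
  have hsumT : ∑ i ∈ T, w i = 1 := by rw [sum_filter_ne_zero, hsum]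
  have hT : 0 < #T := card_pos.mpr (nonempty_of_sum_ne_zero (by rw [hsumT]; exact one_ne_zero))
  calc ∑ i, negMulLog (w i) = ∑ i ∈ T, w i • log (w i)⁻¹ := by
        rw [← sum_filter_of_ne (p := fun i => w i ≠ 0)
          fun i _ hi h => hi (by rw [h, negMulLog_zero])]
        refine sum_congr rfl fun i _ => ?_
        rw [log_inv, negMulLog, smul_eq_mul]
        ring
    _ ≤ log (∑ i ∈ T, w i • (w i)⁻¹) :=
        -- Jensen for the concave `log`, with weights `w i` at the points `(w i)⁻¹`
        strictConcaveOn_log_Ioi.concaveOn.le_map_sum (fun i hi => (hpos i hi).le) hsumT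
          fun i hi => inv_pos.mpr (hpos i hi)
    _ = log #T := by
        rw [sum_congr rfl fun i hi => by rw [smul_eq_mul, mul_inv_cancel₀ (hpos i hi).ne'],
          sum_const, nsmul_one]
    _ ≤ log d := by
        rw [Fintype.card_subtype] at hd
        exact log_le_log (by exact_mod_cast hT) (by exact_mod_cast hd)

theorem vonNeumannEntropy_le_log_of_rank_le {n : Type*} [Fintype n] [DecidableEq n]
    {ρ : Matrix n n ℂ} (hρ : ρ.PosSemidef) (htr : ρ.trace = 1) {d : ℕ} (hd : ρ.rank ≤ d) :
    vonNeumannEntropy hρ.isHermitian ≤ Real.log d := by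
  refine Real.sum_negMulLog_le_log_of_card_support_le hρ.eigenvalues_nonneg ?_
    (hρ.isHermitian.rank_eq_card_non_zero_eigs ▸ hd)
  simpa [htr, eq_comm] using
    congrArg Complex.re hρ.isHermitian.trace_eq_sum_eigenvalues

theorem Matrix.rank_le_card_of_submatrix_comp_eq {m k R : Type*} [Fintype m] [Fintype k]
    [CommRing R] [StrongRankCondition R] {M : Matrix m m R} (g : m → k) (s : k → m)
    (h : M.submatrix (s ∘ g) (s ∘ g) = M) : M.rank ≤ Fintype.card k := by
  rw [← h, ← submatrix_submatrix]
  exact (rank_submatrix_le _ _ _).trans (rank_le_card_width _)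

noncomputable def normalizedIndicator {X : Type*} [DecidableEq X] (S : Finset X) (s : X) : ℂ :=
  if s ∈ S then (1 / Real.sqrt #S : ℂ) else 0

theorem star_normalizedIndicator_mul {X : Type*} [DecidableEq X] (S : Finset X) (s t : X) :
    conj (normalizedIndicator S s) * normalizedIndicator S t =
      if s ∈ S ∧ t ∈ S then (#S : ℂ)⁻¹ else 0 := by
  unfold normalizedIndicator
  by_cases hs : s ∈ S <;> by_cases ht : t ∈ S <;> simp only [hs, ht, if_true, if_false,
    and_true, and_false, map_zero, zero_mul, mul_zero]
  rw [map_div₀, map_one, Complex.conj_ofReal, div_mul_div_comm, one_mul, ← Complex.ofReal_mul,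
    Real.mul_self_sqrt (Nat.cast_nonneg _), one_div, Complex.ofReal_natCast]

section ReducedDensityMatrix

variable {α β γ : Type*} [Fintype α] [Fintype β] [DecidableEq β] [Fintype γ]

noncomputable def reducedDensityMatrix (F : (α ⊕ β → γ) → ℂ) :
    Matrix (α → γ) (α → γ) ℂ :=
  of fun a a' => ∑ b : β → γ, conj (F (Sum.elim a b)) * F (Sum.elim a' b)

theorem reducedDensityMatrix_posSemidef (F : (α ⊕ β → γ) → ℂ) :
    (reducedDensityMatrix (β := β) F).PosSemidef := by
  convert posSemidef_conjTranspose_mul_self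
    (of fun (b : β → γ) (a : α → γ) => F (Sum.elim a b))
  ext a a'
  simp [reducedDensityMatrix, mul_apply]

variable [DecidableEq γ]

theorem reducedDensityMatrix_normalizedIndicator_apply (S : Finset (α ⊕ β → γ))
    (a a' : α → γ) :
    reducedDensityMatrix (normalizedIndicator S) a a' =
      #{b : β → γ | Sum.elim a b ∈ S ∧ Sum.elim a' b ∈ S} / #S := by
  simp only [reducedDensityMatrix, of_apply, star_normalizedIndicator_mul, sum_ite, sum_const,
    nsmul_eq_mul, mul_zero, add_zero, div_eq_mul_inv]

variable [DecidableEq α]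

theorem sum_card_filter_sumElim_mem (S : Finset (α ⊕ β → γ)) :
    ∑ a : α → γ, #{b : β → γ | Sum.elim a b ∈ S} = #S := by
  simp only [card_filter]
  rw [← Fintype.sum_prod_type']
  refine (Fintype.sum_equiv (Equiv.sumArrowEquivProdArrow α β γ).symm _
    (fun s => if s ∈ S then 1 else 0) fun _ => rfl).trans ?_
  simp

theorem trace_reducedDensityMatrix_normalizedIndicator {S : Finset (α ⊕ β → γ)}
    (hS : S.Nonempty) : (reducedDensityMatrix (β := β) (normalizedIndicator S)).trace = 1 := by
  simp only [trace, Matrix.diag_apply, reducedDensityMatrix_normalizedIndicator_apply, and_self]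
  rw [← sum_div, ← Nat.cast_sum, sum_card_filter_sumElim_mem]
  exact div_self (Nat.cast_ne_zero.mpr (card_pos.mpr hS).ne')

end ReducedDensityMatrix

/-- sub-volume-law bound: let `S_I` be a nonempty finite set of
images over `P = A ⊔ B`, let `F` be its normalized indicator target function,
and let `R ⊆ A`. If the count `N_{s_A s'_A}` of images `s_B` over `B` with both
`(s_A, s_B) ∈ S_I` and `(s'_A, s_B) ∈ S_I` depends only on the restrictions of
`s_A` and `s'_A` to `R`, then the entanglement entropy of `F` satisfies
`S(ρ^A) ≤ |R| * log 2`. -/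
theorem entanglement_entropy_sub_volume_law
    (A B : Type*) [Fintype A] [Fintype B] [DecidableEq A] [DecidableEq B]
    (SI : Finset (A ⊕ B → Bool)) (hSI : SI.Nonempty)
    (F : (A ⊕ B → Bool) → ℂ)
    (hF : ∀ s, F s = if s ∈ SI then (1 / Real.sqrt SI.card : ℂ) else 0)
    (R : Finset A)
    (N : (A → Bool) → (A → Bool) → ℕ)
    (hN : ∀ sA s'A, N sA s'A =
      (Finset.univ.filter (fun sB : B → Bool =>
        Sum.elim sA sB ∈ SI ∧ Sum.elim s'A sB ∈ SI)).card)
    (hdep : ∀ sA s'A tA t'A : A → Bool,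
      (∀ r ∈ R, sA r = tA r) → (∀ r ∈ R, s'A r = t'A r) →
      N sA s'A = N tA t'A)
    (ρA : Matrix (A → Bool) (A → Bool) ℂ)
    (hρA : ∀ sA s'A, ρA sA s'A =
      ∑ sB : B → Bool, (starRingEnd ℂ) (F (Sum.elim sA sB)) * F (Sum.elim s'A sB))
    (hherm : ρA.IsHermitian) :
    vonNeumannEntropy hherm ≤ (R.card : ℝ) * Real.log 2 := by
  obtain rfl : F = normalizedIndicator SI := funext hF
  obtain rfl : ρA = reducedDensityMatrix (normalizedIndicator SI) := Matrix.ext hρA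
  have hproj : ∀ sA : A → Bool, ∀ r ∈ R,
      Function.extend Subtype.val (R.restrict sA) (fun _ => false) r = sA r :=
    fun sA r hr => Subtype.val_injective.extend_apply (R.restrict sA) _ ⟨r, hr⟩
  have hrank : (reducedDensityMatrix (β := B) (normalizedIndicator SI)).rank ≤ 2 ^ #R := by
    refine (rank_le_card_of_submatrix_comp_eq R.restrict
      (Function.extend Subtype.val · fun _ => false) ?_).trans (by simp)
    ext sA s'A
    simp only [submatrix_apply, Function.comp_apply,
      reducedDensityMatrix_normalizedIndicator_apply, ← hN]
    rw [hdep _ _ sA s'A (hproj sA) (hproj s'A)]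
  calc vonNeumannEntropy hherm ≤ Real.log (2 ^ #R : ℕ) :=
        vonNeumannEntropy_le_log_of_rank_le (reducedDensityMatrix_posSemidef _)
          (trace_reducedDensityMatrix_normalizedIndicator hSI) hrank
    _ = #R * Real.log 2 := by rw [Nat.cast_pow, Nat.cast_ofNat, Real.log_pow]
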